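/- arXiv:0707.3272 — 7 statements merged into one kernel-verified Lean document; each statement's English description precedes it below -/
import Mathlib

section
/- Every Parseval operator-valued frame {A_j} on H with range in H_o arises, up to unitary identification, as a compression of the orthonormal frame: identifying H with P_A(ℓ²(J)⊗H_o) via the isometry θ_A, one has A_j = L_j* P_A|_{P_A(ℓ²(J)⊗H_o)} for all j. -/
open ContinuousLinearMap

/-!
The analysis operator `θ x = ∑ⱼ Lⱼ (Aⱼ x)` is built from an orthonormal family of isometries
`Lⱼ`, so `Lⱼ* θ = Aⱼ`. Hence `⟪θ x, θ y⟫ = ∑ⱼ ⟪Aⱼ x, Aⱼ y⟫ = ⟪x, y⟫` by the Parseval identity,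
i.e. `θ* θ = 1`. Then `θ*` is onto, so `θ θ*` and `θ` have the same range, and
`Lⱼ* (θ θ*) θ = Lⱼ* θ = Aⱼ`.
-/

section

variable {𝕜 : Type*} [RCLike 𝕜]
  {H H₀ K : Type*}
  [NormedAddCommGroup H] [InnerProductSpace 𝕜 H] [CompleteSpace H]
  [NormedAddCommGroup H₀] [InnerProductSpace 𝕜 H₀] [CompleteSpace H₀]
  [NormedAddCommGroup K] [InnerProductSpace 𝕜 K] [CompleteSpace K]
  {J : Type*}

theorem adjoint_apply_eq_of_hasSum {L : J → H₀ →L[𝕜] K}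
    (hL1 : ∀ j, adjoint (L j) ∘L L j = 1) (hL0 : ∀ i j, i ≠ j → adjoint (L i) ∘L L j = 0)
    {y : J → H₀} {z : K} (hz : HasSum (fun i => L i (y i)) z) (j : J) :
    adjoint (L j) z = y j := by
  classical
  have hterm : (fun i => adjoint (L j) (L i (y i))) = fun i => if i = j then y j else 0 := by
    funext i
    split_ifs with hij
    · subst hij
      simpa using congrArg (· (y i)) (hL1 i)
    · simpa using congrArg (· (y i)) (hL0 j i (Ne.symm hij))
  have hsum := (adjoint (L j)).hasSum hz
  rw [hterm] at hsum
  exact hsum.unique (hasSum_ite_eq j (y j))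

theorem inner_map_map_of_hasSum_parseval {L : J → H₀ →L[𝕜] K} {A : J → H →L[𝕜] H₀}
    (hParseval : ∀ x, HasSum (fun j => adjoint (A j) (A j x)) x) {θ : H →L[𝕜] K}
    (hθ : ∀ x, HasSum (fun j => L j (A j x)) (θ x)) (hA : ∀ j x, adjoint (L j) (θ x) = A j x)
    (x y : H) : inner 𝕜 (θ x) (θ y) = inner 𝕜 x y := by
  have hleft : HasSum (fun j => inner 𝕜 (A j x) (A j y)) (inner 𝕜 (θ x) (θ y)) := by
    have hterm : ∀ j, inner 𝕜 (θ x) (L j (A j y)) = inner 𝕜 (A j x) (A j y) := fun j => by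
      rw [← adjoint_inner_left, hA]
    simpa only [innerSL_apply_apply, hterm] using (innerSL 𝕜 (θ x)).hasSum (hθ y)
  have hright : HasSum (fun j => inner 𝕜 (A j x) (A j y)) (inner 𝕜 x y) := by
    simpa only [innerSL_apply_apply, adjoint_inner_right] using (innerSL 𝕜 x).hasSum (hParseval y)
  exact hleft.unique hright

theorem range_comp_adjoint_eq_range {θ : H →L[𝕜] K} (hθ : adjoint θ ∘L θ = 1) :
    LinearMap.range ((θ ∘L adjoint θ : K →L[𝕜] K) : K →ₗ[𝕜] K) = LinearMap.range (θ : H →ₗ[𝕜] K) :=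
  LinearMap.range_comp_of_range_eq_top _ <| LinearMap.range_eq_top.2 fun x =>
    ⟨θ x, by simpa using congrArg (· x) hθ⟩

end

theorem stmt4_general
    {H H₀ K : Type*}
    [NormedAddCommGroup H] [InnerProductSpace ℂ H] [CompleteSpace H]
    [NormedAddCommGroup H₀] [InnerProductSpace ℂ H₀] [CompleteSpace H₀]
    [NormedAddCommGroup K] [InnerProductSpace ℂ K] [CompleteSpace K]
    {J : Type*}
    (L : J → (H₀ →L[ℂ] K))
    (hL1 : ∀ j, (adjoint (L j)) ∘L (L j) = (1 : H₀ →L[ℂ] H₀))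
    (hL0 : ∀ i j, i ≠ j → (adjoint (L i)) ∘L (L j) = 0)
    (A : J → (H →L[ℂ] H₀))
    (hParseval : ∀ x, HasSum (fun j => adjoint (A j) (A j x)) x)
    (θ : H →L[ℂ] K)
    (hθ : ∀ x, HasSum (fun j => L j (A j x)) (θ x)) :
    Isometry (⇑θ) ∧
      LinearMap.range ((θ ∘L adjoint θ : K →L[ℂ] K) : K →ₗ[ℂ] K) = LinearMap.range (θ : H →ₗ[ℂ] K) ∧
      ∀ j, A j = (adjoint (L j) ∘L (θ ∘L adjoint θ)) ∘L θ := by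
  have hA : ∀ j x, adjoint (L j) (θ x) = A j x := fun j x =>
    adjoint_apply_eq_of_hasSum hL1 hL0 (hθ x) j
  have hθθ : adjoint θ ∘L θ = 1 :=
    θ.inner_map_map_iff_adjoint_comp_self.1 (inner_map_map_of_hasSum_parseval hParseval hθ hA)
  refine ⟨θ.isometry_iff_adjoint_comp_self.2 hθθ, range_comp_adjoint_eq_range hθθ, fun j => ?_⟩
  ext x
  rw [comp_assoc, comp_assoc, hθθ]
  exact (hA j x).symm

/-- Every Parseval operator-valued frame `{A_j}` arises, up to the unitary
identification of `H` with `P_A(ℓ²(J)⊗H₀)` given by the isometry `θ_A`, as the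
compression of the orthonormal frame `{L_j*}` by the frame projection `P_A = θ_A θ_A*`:
`θ_A` is an isometry with range equal to the range of `P_A`, and
`A_j = L_j* ∘ P_A ∘ θ_A` for all `j`. -/
theorem stmt4
    {H H₀ K : Type*}
    [NormedAddCommGroup H] [InnerProductSpace ℂ H] [CompleteSpace H]
    [NormedAddCommGroup H₀] [InnerProductSpace ℂ H₀] [CompleteSpace H₀]
    [NormedAddCommGroup K] [InnerProductSpace ℂ K] [CompleteSpace K]
    {J : Type*}
    (L : J → (H₀ →L[ℂ] K))
    (hL1 : ∀ j, (adjoint (L j)) ∘L (L j) = (1 : H₀ →L[ℂ] H₀))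
    (hL0 : ∀ i j, i ≠ j → (adjoint (L i)) ∘L (L j) = 0)
    (hLsum : ∀ x : K, HasSum (fun j => L j ((adjoint (L j)) x)) x)
    (A : J → (H →L[ℂ] H₀))
    (hParseval : ∀ x, HasSum (fun j => adjoint (A j) (A j x)) x)
    (θ : H →L[ℂ] K)
    (hθ : ∀ x, HasSum (fun j => L j (A j x)) (θ x)) :
    Isometry (⇑θ) ∧
      LinearMap.range ((θ ∘L adjoint θ : K →L[ℂ] K) : K →ₗ[ℂ] K) = LinearMap.range (θ : H →ₗ[ℂ] K) ∧
      ∀ j, A j = (adjoint (L j) ∘L (θ ∘L adjoint θ)) ∘L θ :=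
  stmt4_general L hL1 hL0 A hParseval θ hθ
end

section
/- Let {A_j} be an operator-valued frame and M ∈ B(ℓ²(J)⊗H_o) with M = MP_A such that M*M restricted to P_A(ℓ²(J)⊗H_o) is bounded below (left-invertible). Then {B_j := L_j* M θ_A}_{j∈J} is an operator-valued frame with θ_B = M θ_A, and ‖(M*M)^{-1}‖^{-1} S_A ≤ S_B ≤ ‖M‖² S_A. -/
/-!
The `B_j` are the coordinates of `Mθ_A` with respect to the orthogonal isometries `L_j`, so
`Mθ_A` is their analysis operator and `S_B = θ_A* M* M θ_A`, just as `S_A = θ_A* θ_A`.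
The upper bound is `‖Mθ_A x‖ ≤ ‖M‖ ‖θ_A x‖`. For the lower bound, `M* M N = P_A` fixes
`y = θ_A x`, and two Cauchy–Schwarz estimates, `‖y‖² = re⟪My, MNy⟫ ≤ ‖My‖ ‖MNy‖` and
`‖MNy‖² = re⟪Ny, y⟫ ≤ ‖N‖ ‖y‖²`, give `‖y‖² ≤ ‖N‖ ‖My‖²`. Finally `S_B` is self-adjoint and,
since `M P_A = M`, has the right inverse `S_A⁻¹ θ_A* N θ_A S_A⁻¹`, so it is invertible.
-/

theorem IsSelfAdjoint.isUnit_of_mul_eq_one {R : Type*} [Monoid R] [StarMul R] {a b : R}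
    (ha : IsSelfAdjoint a) (h : a * b = 1) : IsUnit a := by
  have hl : star b * a = 1 := by rw [← ha.star_eq, ← star_mul, h, star_one]
  exact isUnit_iff_exists.mpr ⟨b, h, left_inv_eq_right_inv hl h ▸ hl⟩

namespace ContinuousLinearMap

open RCLike

variable {𝕜 E F G : Type*} [RCLike 𝕜]
  [NormedAddCommGroup E] [InnerProductSpace 𝕜 E] [CompleteSpace E]
  [NormedAddCommGroup F] [InnerProductSpace 𝕜 F] [CompleteSpace F]
  [NormedAddCommGroup G] [InnerProductSpace 𝕜 G] [CompleteSpace G]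

section OrthogonalIsometries

variable {ι : Type*} {L : ι → E →L[𝕜] F}

theorem adjoint_apply_eq_of_hasSum (hL1 : ∀ j, adjoint (L j) ∘L L j = 1)
    (hL0 : ∀ i j, i ≠ j → adjoint (L i) ∘L L j = 0) {a : ι → E} {y : F}
    (h : HasSum (fun j => L j (a j)) y) (j : ι) : adjoint (L j) y = a j := by
  have hsum := hasSum_single (f := fun i => adjoint (L j) (L i (a i))) j
    fun i hi => congr($(hL0 j i (Ne.symm hi)) (a i))
  rw [← comp_apply, hL1 j, one_apply_eq_self] at hsum
  exact (h.mapL (adjoint (L j))).unique hsum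

theorem hasSum_adjoint_comp_self_apply (hL : ∀ y, HasSum (fun j => L j (adjoint (L j) y)) y)
    (T : G →L[𝕜] F) (x : G) :
    HasSum (fun j => adjoint (adjoint (L j) ∘L T) ((adjoint (L j) ∘L T) x))
      ((adjoint T ∘L T) x) := by
  simpa only [adjoint_comp, adjoint_adjoint, comp_apply] using (hL (T x)).mapL (adjoint T)

theorem adjoint_comp_self_eq_of_hasSum (hL1 : ∀ j, adjoint (L j) ∘L L j = 1)
    (hL0 : ∀ i j, i ≠ j → adjoint (L i) ∘L L j = 0)
    (hL : ∀ y, HasSum (fun j => L j (adjoint (L j) y)) y) {A : ι → G →L[𝕜] E}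
    {θ : G →L[𝕜] F} {S : G →L[𝕜] G} (hθ : ∀ x, HasSum (fun j => L j (A j x)) (θ x))
    (hS : ∀ x, HasSum (fun j => adjoint (A j) (A j x)) (S x)) : adjoint θ ∘L θ = S := by
  have hA : ∀ j, adjoint (L j) ∘L θ = A j := fun j =>
    ext fun x => adjoint_apply_eq_of_hasSum hL1 hL0 (hθ x) j
  ext x
  have hθθ := hasSum_adjoint_comp_self_apply hL θ x
  simp only [hA] at hθθ
  exact hθθ.unique (hS x)

end OrthogonalIsometries

theorem inv_norm_mul_norm_sq_le {M : E →L[𝕜] F} {N : E →L[𝕜] E} {y : E}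
    (hy : adjoint M (M (N y)) = y) : ‖N‖⁻¹ * ‖y‖ ^ 2 ≤ ‖M y‖ ^ 2 := by
  have hCS : ‖y‖ ^ 2 ≤ ‖M y‖ * ‖M (N y)‖ := by
    calc ‖y‖ ^ 2 = re (inner 𝕜 y (adjoint M (M (N y)))) := by
          rw [hy, inner_self_eq_norm_sq]
      _ = re (inner 𝕜 (M y) (M (N y))) := by rw [adjoint_inner_right]
      _ ≤ ‖M y‖ * ‖M (N y)‖ := re_inner_le_norm _ _
  have hMN : ‖M (N y)‖ ^ 2 ≤ ‖N‖ * ‖y‖ ^ 2 := by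
    calc ‖M (N y)‖ ^ 2 = re (inner 𝕜 (N y) y) := by
          rw [apply_norm_sq_eq_inner_adjoint_right, comp_apply, hy]
      _ ≤ ‖N y‖ * ‖y‖ := re_inner_le_norm _ _
      _ ≤ ‖N‖ * ‖y‖ * ‖y‖ := mul_le_mul_of_nonneg_right (N.le_opNorm y) (norm_nonneg y)
      _ = ‖N‖ * ‖y‖ ^ 2 := by ring
  refine inv_mul_le_of_le_mul₀ (norm_nonneg N) (sq_nonneg _) ?_
  rcases eq_or_ne y 0 with rfl | hy0
  · simp
  have hy2 : 0 < ‖y‖ ^ 2 := by positivity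
  refine le_of_mul_le_mul_right ?_ hy2
  calc ‖y‖ ^ 2 * ‖y‖ ^ 2 ≤ (‖M y‖ * ‖M (N y)‖) * (‖M y‖ * ‖M (N y)‖) :=
        mul_self_le_mul_self (sq_nonneg _) hCS
    _ = ‖M y‖ ^ 2 * ‖M (N y)‖ ^ 2 := by ring
    _ ≤ ‖M y‖ ^ 2 * (‖N‖ * ‖y‖ ^ 2) := by gcongr
    _ = ‖N‖ * ‖M y‖ ^ 2 * ‖y‖ ^ 2 := by ring

theorem re_inner_smul_adjoint_comp_self_apply (V : E →L[𝕜] F) (r : ℝ) (x : E) :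
    re (inner 𝕜 (((r : 𝕜) • (adjoint V ∘L V)) x) x) = r * ‖V x‖ ^ 2 := by
  rw [smul_apply, inner_smul_left, conj_ofReal, re_ofReal_mul,
    apply_norm_sq_eq_inner_adjoint_left]

theorem smul_adjoint_comp_self_le {U : E →L[𝕜] F} {V : E →L[𝕜] G} {r : ℝ}
    (h : ∀ x, r * ‖V x‖ ^ 2 ≤ ‖U x‖ ^ 2) : (r : 𝕜) • (adjoint V ∘L V) ≤ adjoint U ∘L U := by
  refine ⟨(isPositive_adjoint_comp_self U).isSymmetric.sub
    ((isPositive_adjoint_comp_self V).isSymmetric.smul (conj_ofReal r)), fun x => ?_⟩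
  rw [reApplyInnerSelf_apply, sub_apply, inner_sub_left, map_sub,
    re_inner_smul_adjoint_comp_self_apply, ← apply_norm_sq_eq_inner_adjoint_left]
  linarith [h x]

theorem adjoint_comp_self_le_smul {U : E →L[𝕜] F} {V : E →L[𝕜] G} {r : ℝ}
    (h : ∀ x, ‖U x‖ ^ 2 ≤ r * ‖V x‖ ^ 2) : adjoint U ∘L U ≤ (r : 𝕜) • (adjoint V ∘L V) := by
  refine ⟨((isPositive_adjoint_comp_self V).isSymmetric.smul (conj_ofReal r)).sub
    (isPositive_adjoint_comp_self U).isSymmetric, fun x => ?_⟩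
  rw [reApplyInnerSelf_apply, sub_apply, inner_sub_left, map_sub,
    re_inner_smul_adjoint_comp_self_apply, ← apply_norm_sq_eq_inner_adjoint_left]
  linarith [h x]

end ContinuousLinearMap

open ContinuousLinearMap

theorem stmt6_general
    {H H₀ K : Type*}
    [NormedAddCommGroup H] [InnerProductSpace ℂ H] [CompleteSpace H]
    [NormedAddCommGroup H₀] [InnerProductSpace ℂ H₀] [CompleteSpace H₀]
    [NormedAddCommGroup K] [InnerProductSpace ℂ K] [CompleteSpace K]
    {J : Type*}
    (L : J → (H₀ →L[ℂ] K))
    (hL1 : ∀ j, (adjoint (L j)) ∘L (L j) = (1 : H₀ →L[ℂ] H₀))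
    (hL0 : ∀ i j, i ≠ j → (adjoint (L i)) ∘L (L j) = 0)
    (hLsum : ∀ x : K, HasSum (fun j => L j ((adjoint (L j)) x)) x)
    (A : J → (H →L[ℂ] H₀))
    (S : H →L[ℂ] H)
    (hS : ∀ x, HasSum (fun j => adjoint (A j) (A j x)) (S x))
    (Sinv : H →L[ℂ] H) (hSinv₁ : Sinv ∘L S = 1) (hSinv₂ : S ∘L Sinv = 1)
    (θ : H →L[ℂ] K)
    (hθ : ∀ x, HasSum (fun j => L j (A j x)) (θ x))
    (M : K →L[ℂ] K)
    (hM : M ∘L ((θ ∘L Sinv) ∘L adjoint θ) = M)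
    (N : K →L[ℂ] K)
    (hNright : ((adjoint M ∘L M) ∘L N) = (θ ∘L Sinv) ∘L adjoint θ) :
    (∀ x, HasSum (fun j => L j ((adjoint (L j) ∘L (M ∘L θ)) x)) ((M ∘L θ) x)) ∧
    (∀ x, HasSum
        (fun j => adjoint (adjoint (L j) ∘L (M ∘L θ))
          ((adjoint (L j) ∘L (M ∘L θ)) x))
        ((adjoint (M ∘L θ) ∘L (M ∘L θ)) x)) ∧
    IsUnit (adjoint (M ∘L θ) ∘L (M ∘L θ)) ∧
    ((adjoint (M ∘L θ) ∘L (M ∘L θ)) - ((‖N‖⁻¹ : ℂ) • S)).IsPositive ∧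
    ((((‖M‖ : ℂ)^2) • S) - (adjoint (M ∘L θ) ∘L (M ∘L θ))).IsPositive := by
  have hθθ : adjoint θ ∘L θ = S := adjoint_comp_self_eq_of_hasSum hL1 hL0 hLsum hθ hS
  have hSSinv : ∀ x, adjoint θ (θ (Sinv x)) = x := fun x => by
    rw [← comp_apply (adjoint θ), hθθ, ← comp_apply S, hSinv₂, one_apply_eq_self]
  have hMP : ∀ y, M (θ (Sinv (adjoint θ y))) = M y := fun y => congr($hM y)
  have hMMN : ∀ y, adjoint M (M (N y)) = θ (Sinv (adjoint θ y)) := fun y => congr($hNright y)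
  have hMMNθ : ∀ x, adjoint M (M (N (θ x))) = θ x := fun x => by
    rw [hMMN, ← comp_apply (adjoint θ), hθθ, ← comp_apply Sinv, hSinv₁, one_apply_eq_self]
  refine ⟨fun x => hLsum _, hasSum_adjoint_comp_self_apply hLsum (M ∘L θ), ?_, ?_, ?_⟩
  · refine (isPositive_adjoint_comp_self _).isSelfAdjoint.isUnit_of_mul_eq_one
      (b := (Sinv ∘L adjoint θ) ∘L N ∘L θ ∘L Sinv) ?_
    ext x
    simp only [mul_def, comp_apply, adjoint_comp, hMP, hMMN, hSSinv, one_apply_eq_self]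
  · rw [← hθθ]
    have h := smul_adjoint_comp_self_le (𝕜 := ℂ) (U := M ∘L θ) (V := θ) (r := ‖N‖⁻¹)
      fun x => inv_norm_mul_norm_sq_le (hMMNθ x)
    rwa [RCLike.ofReal_inv] at h
  · rw [← hθθ]
    have h := adjoint_comp_self_le_smul (𝕜 := ℂ) (U := M ∘L θ) (V := θ) (r := ‖M‖ ^ 2)
      fun x => (pow_le_pow_left₀ (norm_nonneg _) (M.le_opNorm (θ x)) 2).trans_eq (mul_pow _ _ _)
    rwa [RCLike.ofReal_pow] at h

/-- Let `{A_j}` be an operator-valued frame with analysis operator `θ_A`,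
frame operator `S_A` (inverse `Sinv`) and frame projection `P = θ_A Sinv θ_A*`. Let
`M` satisfy `M = M P` and suppose `M*M` is invertible on the range of `P`, with inverse
`N` (`N = P N P`). Then `{B_j := L_j* M θ_A}` is an operator-valued frame with analysis
operator `M θ_A` and with frame operator `S_B = (Mθ_A)*(Mθ_A)` satisfying
`‖N‖⁻¹ S_A ≤ S_B ≤ ‖M‖² S_A`. -/
theorem stmt6
    {H H₀ K : Type*}
    [NormedAddCommGroup H] [InnerProductSpace ℂ H] [CompleteSpace H]
    [NormedAddCommGroup H₀] [InnerProductSpace ℂ H₀] [CompleteSpace H₀]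
    [NormedAddCommGroup K] [InnerProductSpace ℂ K] [CompleteSpace K]
    {J : Type*}
    (L : J → (H₀ →L[ℂ] K))
    (hL1 : ∀ j, (adjoint (L j)) ∘L (L j) = (1 : H₀ →L[ℂ] H₀))
    (hL0 : ∀ i j, i ≠ j → (adjoint (L i)) ∘L (L j) = 0)
    (hLsum : ∀ x : K, HasSum (fun j => L j ((adjoint (L j)) x)) x)
    (A : J → (H →L[ℂ] H₀))
    (S : H →L[ℂ] H)
    (hS : ∀ x, HasSum (fun j => adjoint (A j) (A j x)) (S x))
    (hSpos : S.IsPositive)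
    (Sinv : H →L[ℂ] H) (hSinv₁ : Sinv ∘L S = 1) (hSinv₂ : S ∘L Sinv = 1)
    (θ : H →L[ℂ] K)
    (hθ : ∀ x, HasSum (fun j => L j (A j x)) (θ x))
    (M : K →L[ℂ] K)
    (hM : M ∘L ((θ ∘L Sinv) ∘L adjoint θ) = M)
    (N : K →L[ℂ] K)
    (hN : N ∘L ((θ ∘L Sinv) ∘L adjoint θ) = N)
    (hN' : ((θ ∘L Sinv) ∘L adjoint θ) ∘L N = N)
    (hNleft : (N ∘L (adjoint M ∘L M)) = (θ ∘L Sinv) ∘L adjoint θ)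
    (hNright : ((adjoint M ∘L M) ∘L N) = (θ ∘L Sinv) ∘L adjoint θ) :
    (∀ x, HasSum (fun j => L j ((adjoint (L j) ∘L (M ∘L θ)) x)) ((M ∘L θ) x)) ∧
    (∀ x, HasSum
        (fun j => adjoint (adjoint (L j) ∘L (M ∘L θ))
          ((adjoint (L j) ∘L (M ∘L θ)) x))
        ((adjoint (M ∘L θ) ∘L (M ∘L θ)) x)) ∧
    IsUnit (adjoint (M ∘L θ) ∘L (M ∘L θ)) ∧
    ((adjoint (M ∘L θ) ∘L (M ∘L θ)) - ((‖N‖⁻¹ : ℂ) • S)).IsPositive ∧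
    ((((‖M‖ : ℂ)^2) • S) - (adjoint (M ∘L θ) ∘L (M ∘L θ))).IsPositive :=
  stmt6_general L hL1 hL0 hLsum A S hS Sinv hSinv₁ hSinv₂ θ hθ M hM N hNright
end

section
/- Two operator-valued frames {A_j} and {B_j} on the same Hilbert space H with range H_o are right-similar (B_j = A_jT for some invertible T ∈ B(H)) if and only if their frame projections coincide: P_B = P_A. In that case T is unique and equals S_A^{-1}θ_A*θ_B. -/
/-!
Each frame is recovered from its analysis operator, `A j = (L j)† θA`, and completeness of `L`
gives `θA† θB = ∑ j, (A j)† B j`, in particular `S_A = θA† θA`. Right-similarity `B j = A j T`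
therefore means `θB = θA T`, which forces `T = S_A⁻¹ θA† θB`. If `θB = θA T` with `T`
invertible, then `S_B = T† S_A T`, so `T S_B⁻¹ T† = S_A⁻¹` and `P_B = P_A`. Conversely, if
`P_B = P_A`, then `θA (S_A⁻¹ θA† θB) = P_A θB = P_B θB = θB`, and `S_B⁻¹ θB† θA` is a two-sided
inverse of `S_A⁻¹ θA† θB`.
-/

open ContinuousLinearMap

theorem mul_mul_eq_of_mul_mul_mul_eq_one {R : Type*} [Monoid R] {s a g t : R} {u : Rˣ}
    (h : s * (a * g * u) = 1) (hg : g * t = 1) : u * s * a = t := by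
  calc (u : R) * s * a = u * (s * (a * g * u)) * u⁻¹ * t := by
        simp only [mul_assoc, Units.mul_inv_cancel_left, hg, mul_one]
    _ = t := by rw [h, mul_one, Units.mul_inv, one_mul]

section AnalysisOperator

variable {𝕜 E F G J : Type*} [RCLike 𝕜]
  [NormedAddCommGroup E] [InnerProductSpace 𝕜 E]
  [NormedAddCommGroup F] [InnerProductSpace 𝕜 F] [CompleteSpace F]
  [NormedAddCommGroup G] [InnerProductSpace 𝕜 G] [CompleteSpace G]
  {L : J → F →L[𝕜] G} {C D : J → E →L[𝕜] F} {θC θD : E →L[𝕜] G}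

theorem adjoint_comp_eq_of_hasSum
    (hL1 : ∀ j, adjoint (L j) ∘L L j = 1) (hL0 : ∀ i j, i ≠ j → adjoint (L i) ∘L L j = 0)
    (hθ : ∀ x, HasSum (fun j => L j (C j x)) (θC x)) (j : J) :
    adjoint (L j) ∘L θC = C j := by
  ext x
  have hsingle : HasSum (fun i => adjoint (L j) (L i (C i x))) (C j x) := by
    convert hasSum_single (f := fun i => adjoint (L j) (L i (C i x))) j
      (fun i hi => by simpa using congr($(hL0 j i (Ne.symm hi)) (C i x))) using 1
    simpa using congr($(hL1 j) (C j x)).symm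
  exact ((hθ x).mapL (adjoint (L j))).unique hsingle

theorem adjoint_comp_eq_of_hasSum_adjoint_apply [CompleteSpace E]
    (hLsum : ∀ y, HasSum (fun j => L j (adjoint (L j) y)) y)
    (hC : ∀ j, adjoint (L j) ∘L θC = C j) (hD : ∀ j, adjoint (L j) ∘L θD = D j)
    {S : E →L[𝕜] E} (hS : ∀ x, HasSum (fun j => adjoint (C j) (D j x)) (S x)) :
    adjoint θC ∘L θD = S := by
  ext x
  have hterm : ∀ j, adjoint θC (L j (adjoint (L j) (θD x))) = adjoint (C j) (D j x) := by
    intro j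
    rw [← hC j, ← hD j, adjoint_comp, adjoint_adjoint]
    rfl
  have hsum := (hLsum (θD x)).mapL (adjoint θC)
  simp only [hterm] at hsum
  exact hsum.unique (hS x)

theorem forall_eq_comp_iff_eq_comp
    (hL1 : ∀ j, adjoint (L j) ∘L L j = 1) (hL0 : ∀ i j, i ≠ j → adjoint (L i) ∘L L j = 0)
    (hθC : ∀ x, HasSum (fun j => L j (C j x)) (θC x))
    (hθD : ∀ x, HasSum (fun j => L j (D j x)) (θD x)) (T : E →L[𝕜] E) :
    (∀ j, D j = C j ∘L T) ↔ θD = θC ∘L T := by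
  constructor
  · intro hDC
    ext x
    refine (hθD x).unique ?_
    simpa only [hDC, comp_apply] using hθC (T x)
  · rintro rfl j
    rw [← adjoint_comp_eq_of_hasSum hL1 hL0 hθC j, ← adjoint_comp_eq_of_hasSum hL1 hL0 hθD j,
      comp_assoc]

end AnalysisOperator

section FrameProjection

variable {𝕜 E G : Type*} [RCLike 𝕜]
  [NormedAddCommGroup E] [InnerProductSpace 𝕜 E] [CompleteSpace E]
  [NormedAddCommGroup G] [InnerProductSpace 𝕜 G] [CompleteSpace G]
  {θ θA θB : E →L[𝕜] G} {S SAinv SBinv : E →L[𝕜] E}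

noncomputable def frameProj (θ : E →L[𝕜] G) (Sinv : E →L[𝕜] E) : G →L[𝕜] G :=
  (θ ∘L Sinv) ∘L adjoint θ

theorem frameProj_comp_self (h : S ∘L (adjoint θ ∘L θ) = 1) :
    frameProj θ S ∘L θ = θ := by
  simp only [frameProj, comp_assoc, h, one_def, comp_id]

theorem eq_of_eq_comp (hA : SAinv ∘L (adjoint θA ∘L θA) = 1) {T : E →L[𝕜] E}
    (hT : θB = θA ∘L T) : T = SAinv ∘L (adjoint θA ∘L θB) := by
  rw [hT, ← comp_assoc, ← comp_assoc, comp_assoc SAinv, hA, one_def, id_comp]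

theorem frameProj_eq_of_eq_comp (hA : (adjoint θA ∘L θA) ∘L SAinv = 1)
    (hB : SBinv ∘L (adjoint θB ∘L θB) = 1) {T : E →L[𝕜] E} (hT : IsUnit T)
    (hθ : θB = θA ∘L T) :
    frameProj θB SBinv = frameProj θA SAinv := by
  obtain ⟨u, rfl⟩ := hT
  subst hθ
  have hB' : SBinv * (adjoint (u : E →L[𝕜] E) * (adjoint θA ∘L θA) * u) = 1 := by
    rw [← hB, adjoint_comp]
    rfl
  have hu := mul_mul_eq_of_mul_mul_mul_eq_one hB' hA
  rw [frameProj, adjoint_comp, ← hu]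
  rfl

theorem comp_adjoint_comp_comp_eq_one_of_frameProj_eq (h : S ∘L (adjoint θ ∘L θ) = 1)
    {θ' : E →L[𝕜] G} {S' : E →L[𝕜] E}
    (hP : frameProj θ' S' = frameProj θ S) :
    (S ∘L (adjoint θ ∘L θ')) ∘L (S' ∘L (adjoint θ' ∘L θ)) = 1 := by
  have hassoc : (S ∘L (adjoint θ ∘L θ')) ∘L (S' ∘L (adjoint θ' ∘L θ)) =
      S ∘L (adjoint θ ∘L (frameProj θ' S' ∘L θ)) := by
    simp only [frameProj, comp_assoc]
  rw [hassoc, hP, frameProj_comp_self h, h]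

theorem isUnit_and_eq_comp_of_frameProj_eq (hA : SAinv ∘L (adjoint θA ∘L θA) = 1)
    (hB : SBinv ∘L (adjoint θB ∘L θB) = 1)
    (hP : frameProj θB SBinv = frameProj θA SAinv) :
    IsUnit (SAinv ∘L (adjoint θA ∘L θB)) ∧ θB = θA ∘L (SAinv ∘L (adjoint θA ∘L θB)) := by
  refine ⟨⟨⟨_, SBinv ∘L (adjoint θB ∘L θA),
    comp_adjoint_comp_comp_eq_one_of_frameProj_eq hA hP,
    comp_adjoint_comp_comp_eq_one_of_frameProj_eq hB hP.symm⟩, rfl⟩, ?_⟩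
  calc θB = frameProj θB SBinv ∘L θB := (frameProj_comp_self hB).symm
    _ = θA ∘L (SAinv ∘L (adjoint θA ∘L θB)) := by rw [hP, frameProj]; simp only [comp_assoc]

end FrameProjection

theorem stmt8_general
    {H H₀ K : Type*}
    [NormedAddCommGroup H] [InnerProductSpace ℂ H] [CompleteSpace H]
    [NormedAddCommGroup H₀] [InnerProductSpace ℂ H₀] [CompleteSpace H₀]
    [NormedAddCommGroup K] [InnerProductSpace ℂ K] [CompleteSpace K]
    {J : Type*}
    (L : J → (H₀ →L[ℂ] K))
    (hL1 : ∀ j, (adjoint (L j)) ∘L (L j) = (1 : H₀ →L[ℂ] H₀))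
    (hL0 : ∀ i j, i ≠ j → (adjoint (L i)) ∘L (L j) = 0)
    (hLsum : ∀ x : K, HasSum (fun j => L j ((adjoint (L j)) x)) x)
    (A B : J → (H →L[ℂ] H₀))
    (SA SB : H →L[ℂ] H)
    (hSA : ∀ x, HasSum (fun j => adjoint (A j) (A j x)) (SA x))
    (hSB : ∀ x, HasSum (fun j => adjoint (B j) (B j x)) (SB x))
    (SAinv : H →L[ℂ] H) (hSAinv₁ : SAinv ∘L SA = 1) (hSAinv₂ : SA ∘L SAinv = 1)
    (SBinv : H →L[ℂ] H) (hSBinv₁ : SBinv ∘L SB = 1)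
    (θA θB : H →L[ℂ] K)
    (hθA : ∀ x, HasSum (fun j => L j (A j x)) (θA x))
    (hθB : ∀ x, HasSum (fun j => L j (B j x)) (θB x)) :
    ((∃ T : H →L[ℂ] H, IsUnit T ∧ ∀ j, B j = A j ∘L T) ↔
      (θB ∘L SBinv) ∘L adjoint θB = (θA ∘L SAinv) ∘L adjoint θA) ∧
    (∀ T : H →L[ℂ] H, IsUnit T → (∀ j, B j = A j ∘L T) →
      T = SAinv ∘L (adjoint θA ∘L θB)) := by
  have hA := adjoint_comp_eq_of_hasSum hL1 hL0 hθA
  have hB := adjoint_comp_eq_of_hasSum hL1 hL0 hθB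
  rw [← adjoint_comp_eq_of_hasSum_adjoint_apply hLsum hA hA hSA] at hSAinv₁ hSAinv₂
  rw [← adjoint_comp_eq_of_hasSum_adjoint_apply hLsum hB hB hSB] at hSBinv₁
  simp only [forall_eq_comp_iff_eq_comp hL1 hL0 hθA hθB]
  refine ⟨⟨?_, fun hP => ⟨_, isUnit_and_eq_comp_of_frameProj_eq hSAinv₁ hSBinv₁ hP⟩⟩,
    fun T _ hT => eq_of_eq_comp hSAinv₁ hT⟩
  rintro ⟨T, hT, hθ⟩
  exact frameProj_eq_of_eq_comp hSAinv₂ hSBinv₁ hT hθ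

/-- Two operator-valued frames `{A_j}` and `{B_j}` on the same Hilbert
space `H` with range `H₀` are right-similar (`B_j = A_j T` for some invertible `T`)
if and only if their frame projections coincide: `P_B = P_A`. In that case `T` is
unique and equals `S_A⁻¹ θ_A* θ_B`. -/
theorem stmt8
    {H H₀ K : Type*}
    [NormedAddCommGroup H] [InnerProductSpace ℂ H] [CompleteSpace H]
    [NormedAddCommGroup H₀] [InnerProductSpace ℂ H₀] [CompleteSpace H₀]
    [NormedAddCommGroup K] [InnerProductSpace ℂ K] [CompleteSpace K]
    {J : Type*}
    (L : J → (H₀ →L[ℂ] K))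
    (hL1 : ∀ j, (adjoint (L j)) ∘L (L j) = (1 : H₀ →L[ℂ] H₀))
    (hL0 : ∀ i j, i ≠ j → (adjoint (L i)) ∘L (L j) = 0)
    (hLsum : ∀ x : K, HasSum (fun j => L j ((adjoint (L j)) x)) x)
    (A B : J → (H →L[ℂ] H₀))
    (SA SB : H →L[ℂ] H)
    (hSA : ∀ x, HasSum (fun j => adjoint (A j) (A j x)) (SA x))
    (hSB : ∀ x, HasSum (fun j => adjoint (B j) (B j x)) (SB x))
    (hSApos : SA.IsPositive) (hSBpos : SB.IsPositive)
    (SAinv : H →L[ℂ] H) (hSAinv₁ : SAinv ∘L SA = 1) (hSAinv₂ : SA ∘L SAinv = 1)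
    (SBinv : H →L[ℂ] H) (hSBinv₁ : SBinv ∘L SB = 1) (hSBinv₂ : SB ∘L SBinv = 1)
    (θA θB : H →L[ℂ] K)
    (hθA : ∀ x, HasSum (fun j => L j (A j x)) (θA x))
    (hθB : ∀ x, HasSum (fun j => L j (B j x)) (θB x)) :
    ((∃ T : H →L[ℂ] H, IsUnit T ∧ ∀ j, B j = A j ∘L T) ↔
      (θB ∘L SBinv) ∘L adjoint θB = (θA ∘L SAinv) ∘L adjoint θA) ∧
    (∀ T : H →L[ℂ] H, IsUnit T → (∀ j, B j = A j ∘L T) →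
      T = SAinv ∘L (adjoint θA ∘L θB)) :=
  stmt8_general L hL1 hL0 hLsum A B SA SB hSA hSB SAinv hSAinv₁ hSAinv₂ SBinv hSBinv₁ θA θB hθA hθB
end

section
/- If {A_j} is a Parseval operator-valued frame and R ∈ B(H_o) is invertible, then {RA_j} is Parseval if and only if P_A(I⊗R*R)P_A = P_A, and in that case P_B = (I⊗R)P_A(I⊗R*). In particular {RA_j} is Parseval whenever R is an isometry. -/
/-!
Since the `Lⱼ` are isometries with pairwise orthogonal ranges that sum to the identity, any
family `Bⱼ` with analysis operator `θ_B = ∑ Lⱼ Bⱼ` satisfies `Bⱼ = Lⱼ* θ_B`, so its frame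
operator `∑ Bⱼ* Bⱼ` is `θ_B* θ_B`. The intertwining `IR Lⱼ = Lⱼ R` gives `θ_{RA} = IR θ_A`, hence
`{R Aⱼ}` is Parseval iff `θ_A* (IR* IR) θ_A = 1`; conjugating by the isometry `θ_A` turns this
into `P_A (IR* IR) P_A = P_A`. If `R* R = 1`, the frame operators of `{R Aⱼ}` and `{Aⱼ}` agree.
-/

open ContinuousLinearMap

section OrthonormalIsometries

variable {𝕜 H H₀ K J : Type*} [RCLike 𝕜]
  [NormedAddCommGroup H₀] [InnerProductSpace 𝕜 H₀] [CompleteSpace H₀]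
  [NormedAddCommGroup K] [InnerProductSpace 𝕜 K] [CompleteSpace K]
  {L : J → H₀ →L[𝕜] K}

lemma eq_adjoint_comp_of_hasSum [NormedAddCommGroup H] [NormedSpace 𝕜 H]
    (hL1 : ∀ j, adjoint (L j) ∘L L j = 1) (hL0 : ∀ i j, i ≠ j → adjoint (L i) ∘L L j = 0)
    {B : J → H →L[𝕜] H₀} {θ : H →L[𝕜] K} (hθ : ∀ x, HasSum (fun j => L j (B j x)) (θ x))
    (i : J) : B i = adjoint (L i) ∘L θ := by
  classical
  ext x
  have hterm : (fun j => adjoint (L i) (L j (B j x))) = fun j => if j = i then B i x else 0 := by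
    funext j
    split_ifs with h
    · subst h
      rw [← comp_apply, hL1, one_apply_eq_self]
    · rw [← comp_apply, hL0 i j (Ne.symm h), zero_apply]
  have hsum := (hθ x).mapL (adjoint (L i))
  simp only [hterm] at hsum
  exact (hasSum_ite_eq i (B i x)).unique hsum

lemma hasSum_adjoint_apply_apply_of_hasSum
    [NormedAddCommGroup H] [InnerProductSpace 𝕜 H] [CompleteSpace H]
    (hL1 : ∀ j, adjoint (L j) ∘L L j = 1) (hL0 : ∀ i j, i ≠ j → adjoint (L i) ∘L L j = 0)
    (hLsum : ∀ y, HasSum (fun j => L j (adjoint (L j) y)) y)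
    {B : J → H →L[𝕜] H₀} {θ : H →L[𝕜] K} (hθ : ∀ x, HasSum (fun j => L j (B j x)) (θ x))
    (x : H) : HasSum (fun j => adjoint (B j) (B j x)) ((adjoint θ ∘L θ) x) := by
  have hterm : (fun j => adjoint (B j) (B j x)) =
      fun j => adjoint θ (L j (adjoint (L j) (θ x))) := by
    funext j
    rw [eq_adjoint_comp_of_hasSum hL1 hL0 hθ j, adjoint_comp, adjoint_adjoint]
    rfl
  rw [hterm]
  exact (hLsum (θ x)).mapL (adjoint θ)

end OrthonormalIsometries

lemma hasSum_comp_of_comp_eq {S H H₀ K J : Type*} [Semiring S]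
    [AddCommMonoid H] [Module S H] [TopologicalSpace H]
    [AddCommMonoid H₀] [Module S H₀] [TopologicalSpace H₀]
    [AddCommMonoid K] [Module S K] [TopologicalSpace K]
    {L : J → H₀ →L[S] K} {A : J → H →L[S] H₀} {θ : H →L[S] K}
    (hθ : ∀ x, HasSum (fun j => L j (A j x)) (θ x))
    {R : H₀ →L[S] H₀} {IR : K →L[S] K} (hIR : ∀ j, IR ∘L L j = L j ∘L R) (x : H) :
    HasSum (fun j => L j ((R ∘L A j) x)) ((IR ∘L θ) x) := by
  have hterm : (fun j => IR (L j (A j x))) = fun j => L j ((R ∘L A j) x) :=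
    funext fun j => DFunLike.congr_fun (hIR j) (A j x)
  rw [← hterm]
  exact (hθ x).mapL IR

lemma forall_hasSum_self_iff_eq_one {R E J : Type*} [Semiring R] [AddCommMonoid E] [Module R E]
    [TopologicalSpace E] [T2Space E] {f : E → J → E} {S : E →L[R] E}
    (hS : ∀ x, HasSum (f x) (S x)) :
    (∀ x, HasSum (f x) x) ↔ S = 1 := by
  constructor
  · intro h
    ext x
    exact (hS x).unique (h x)
  · rintro rfl x
    exact hS x

lemma adjoint_comp_comp_eq_one_iff {𝕜 H K : Type*} [RCLike 𝕜]
    [NormedAddCommGroup H] [InnerProductSpace 𝕜 H] [CompleteSpace H]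
    [NormedAddCommGroup K] [InnerProductSpace 𝕜 K] [CompleteSpace K]
    {θ : H →L[𝕜] K} (hθ : adjoint θ ∘L θ = 1) (T : K →L[𝕜] K) :
    adjoint θ ∘L (T ∘L θ) = 1 ↔
      (θ ∘L adjoint θ) ∘L (T ∘L (θ ∘L adjoint θ)) = θ ∘L adjoint θ := by
  constructor
  · intro h
    calc (θ ∘L adjoint θ) ∘L (T ∘L (θ ∘L adjoint θ))
        = θ ∘L (adjoint θ ∘L (T ∘L θ)) ∘L adjoint θ := by simp only [comp_assoc]
      _ = θ ∘L adjoint θ := by rw [h, one_def, id_comp]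
  · intro h
    calc adjoint θ ∘L (T ∘L θ)
        = (adjoint θ ∘L θ) ∘L (adjoint θ ∘L (T ∘L θ)) ∘L (adjoint θ ∘L θ) := by
          rw [hθ, one_def, id_comp, comp_id]
      _ = adjoint θ ∘L ((θ ∘L adjoint θ) ∘L (T ∘L (θ ∘L adjoint θ))) ∘L θ := by
          simp only [comp_assoc]
      _ = 1 := by rw [h]; simp only [← comp_assoc, hθ, one_def, id_comp]

theorem stmt11_general
    {H H₀ K : Type*}
    [NormedAddCommGroup H] [InnerProductSpace ℂ H] [CompleteSpace H]
    [NormedAddCommGroup H₀] [InnerProductSpace ℂ H₀] [CompleteSpace H₀]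
    [NormedAddCommGroup K] [InnerProductSpace ℂ K] [CompleteSpace K]
    {J : Type*}
    (L : J → (H₀ →L[ℂ] K))
    (hL1 : ∀ j, (adjoint (L j)) ∘L (L j) = (1 : H₀ →L[ℂ] H₀))
    (hL0 : ∀ i j, i ≠ j → (adjoint (L i)) ∘L (L j) = 0)
    (hLsum : ∀ x : K, HasSum (fun j => L j ((adjoint (L j)) x)) x)
    (A : J → (H →L[ℂ] H₀))
    (θ : H →L[ℂ] K)
    (hθ : ∀ x, HasSum (fun j => L j (A j x)) (θ x))
    (hPars : adjoint θ ∘L θ = 1)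
    (R : H₀ →L[ℂ] H₀)
    (IR : K →L[ℂ] K) (hIR : ∀ j, IR ∘L L j = L j ∘L R) :
    ((∀ x, HasSum (fun j => adjoint (R ∘L A j) ((R ∘L A j) x)) x) ↔
      (θ ∘L adjoint θ) ∘L ((adjoint IR ∘L IR) ∘L (θ ∘L adjoint θ)) =
        θ ∘L adjoint θ) ∧
    ((∀ x, HasSum (fun j => adjoint (R ∘L A j) ((R ∘L A j) x)) x) →
      (IR ∘L θ) ∘L adjoint (IR ∘L θ) =
        (IR ∘L (θ ∘L adjoint θ)) ∘L adjoint IR) ∧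
    (adjoint R ∘L R = 1 →
      ∀ x, HasSum (fun j => adjoint (R ∘L A j) ((R ∘L A j) x)) x) := by
  have hParsB := forall_hasSum_self_iff_eq_one
    (hasSum_adjoint_apply_apply_of_hasSum hL1 hL0 hLsum (hasSum_comp_of_comp_eq hθ hIR))
  have hFrameOpB : adjoint (IR ∘L θ) ∘L (IR ∘L θ) = adjoint θ ∘L ((adjoint IR ∘L IR) ∘L θ) := by
    simp only [adjoint_comp, comp_assoc]
  refine ⟨?_, fun _ => by simp only [adjoint_comp, comp_assoc], fun hR x => ?_⟩
  · rw [hParsB, hFrameOpB, adjoint_comp_comp_eq_one_iff hPars]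
  · have hA := hasSum_adjoint_apply_apply_of_hasSum hL1 hL0 hLsum hθ x
    rw [hPars, one_apply_eq_self] at hA
    convert hA using 2 with j
    rw [adjoint_comp, comp_apply, comp_apply, ← comp_apply (adjoint R), hR, one_apply_eq_self]

/-- Let `{A_j}` be a Parseval operator-valued frame with frame projection
`P_A = θ_A θ_A*` and let `R ∈ B(H₀)` be invertible, with `IR = I⊗R` on `K = ℓ²(J)⊗H₀`.
Then `{R A_j}` is Parseval iff `P_A (I⊗R*R) P_A = P_A`; in that case its frame
projection is `(I⊗R) P_A (I⊗R)*`. In particular `{R A_j}` is Parseval whenever `R` is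
an isometry. -/
theorem stmt11
    {H H₀ K : Type*}
    [NormedAddCommGroup H] [InnerProductSpace ℂ H] [CompleteSpace H]
    [NormedAddCommGroup H₀] [InnerProductSpace ℂ H₀] [CompleteSpace H₀]
    [NormedAddCommGroup K] [InnerProductSpace ℂ K] [CompleteSpace K]
    {J : Type*}
    (L : J → (H₀ →L[ℂ] K))
    (hL1 : ∀ j, (adjoint (L j)) ∘L (L j) = (1 : H₀ →L[ℂ] H₀))
    (hL0 : ∀ i j, i ≠ j → (adjoint (L i)) ∘L (L j) = 0)
    (hLsum : ∀ x : K, HasSum (fun j => L j ((adjoint (L j)) x)) x)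
    (A : J → (H →L[ℂ] H₀))
    (θ : H →L[ℂ] K)
    (hθ : ∀ x, HasSum (fun j => L j (A j x)) (θ x))
    (hPars : adjoint θ ∘L θ = 1)
    (R Rinv : H₀ →L[ℂ] H₀) (hR₁ : Rinv ∘L R = 1) (hR₂ : R ∘L Rinv = 1)
    (IR : K →L[ℂ] K) (hIR : ∀ j, IR ∘L L j = L j ∘L R) :
    ((∀ x, HasSum (fun j => adjoint (R ∘L A j) ((R ∘L A j) x)) x) ↔
      (θ ∘L adjoint θ) ∘L ((adjoint IR ∘L IR) ∘L (θ ∘L adjoint θ)) =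
        θ ∘L adjoint θ) ∧
    ((∀ x, HasSum (fun j => adjoint (R ∘L A j) ((R ∘L A j) x)) x) →
      (IR ∘L θ) ∘L adjoint (IR ∘L θ) =
        (IR ∘L (θ ∘L adjoint θ)) ∘L adjoint IR) ∧
    (adjoint R ∘L R = 1 →
      ∀ x, HasSum (fun j => adjoint (R ∘L A j) ((R ∘L A j) x)) x) :=
  stmt11_general L hL1 hL0 hLsum A θ hθ hPars R IR hIR
end

section
/- An operator-valued frame {B_j} is a dual of {A_j} (i.e., θ_B*θ_A = I) if and only if Σ_{j∈J} B_j*A_j = I in the strong operator topology. If moreover {B_j} is both right-similar to and a dual of {A_j}, then B_j = A_j S_A^{-1} for all j (i.e., B is the canonical dual). -/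
open ContinuousLinearMap

/-!
Orthonormality of the `L j` lets one read off `B j = L j* θ_B` from the synthesis series of
`θ_B`, so `θ_B* θ_A x = Σ_j B_j* A_j x` and the two notions of duality coincide. If moreover
`B_j = A_j T`, the dual series reads `T* S_A = 1`; since `S_A` is self-adjoint with right
inverse `S_A⁻¹`, this forces `T = S_A⁻¹`.
-/

theorem IsSelfAdjoint.eq_of_star_mul_eq_one {R : Type*} [Monoid R] [StarMul R] {s s' t : R}
    (hs : IsSelfAdjoint s) (hss' : s * s' = 1) (hts : star t * s = 1) : t = s' := by
  have hstar_t : star t = s' := left_inv_eq_right_inv hts hss'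
  have hstar_s' : star s' = s' := by
    refine left_inv_eq_right_inv ?_ hss'
    simpa only [star_mul, star_one, hs.star_eq] using congrArg star hss'
  rw [← star_star t, hstar_t, hstar_s']

section Frames

variable {𝕜 E F G : Type*} [RCLike 𝕜]
  [NormedAddCommGroup E] [InnerProductSpace 𝕜 E]
  [NormedAddCommGroup F] [InnerProductSpace 𝕜 F] [CompleteSpace F]
  [NormedAddCommGroup G] [InnerProductSpace 𝕜 G] [CompleteSpace G]
  {J : Type*} {L : J → (F →L[𝕜] G)}

theorem adjoint_apply_eq_of_hasSum_of_orthonormal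
    (hL1 : ∀ j, adjoint (L j) ∘L L j = 1) (hL0 : ∀ i j, i ≠ j → adjoint (L i) ∘L L j = 0)
    {v : J → F} {w : G} (hw : HasSum (fun i => L i (v i)) w) (j : J) :
    adjoint (L j) w = v j := by
  classical
  have hterm : ∀ i, adjoint (L j) (L i (v i)) = if i = j then v j else 0 := by
    intro i
    split_ifs with hij
    · subst hij
      simpa using congrArg (· (v i)) (hL1 i)
    · simpa using congrArg (· (v i)) (hL0 j i (Ne.symm hij))
  refine ((adjoint (L j)).hasSum hw).unique ?_
  simpa only [hterm] using hasSum_ite_eq j (v j)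

theorem eq_adjoint_comp_of_hasSum_of_orthonormal
    (hL1 : ∀ j, adjoint (L j) ∘L L j = 1) (hL0 : ∀ i j, i ≠ j → adjoint (L i) ∘L L j = 0)
    {B : J → (E →L[𝕜] F)} {θ : E →L[𝕜] G} (hθ : ∀ x, HasSum (fun j => L j (B j x)) (θ x))
    (j : J) : B j = adjoint (L j) ∘L θ :=
  ext fun x => (adjoint_apply_eq_of_hasSum_of_orthonormal hL1 hL0 (hθ x) j).symm

theorem hasSum_adjoint_apply_of_orthonormal [CompleteSpace E]
    (hL1 : ∀ j, adjoint (L j) ∘L L j = 1) (hL0 : ∀ i j, i ≠ j → adjoint (L i) ∘L L j = 0)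
    {A B : J → (E →L[𝕜] F)} {θA θB : E →L[𝕜] G}
    (hθA : ∀ x, HasSum (fun j => L j (A j x)) (θA x))
    (hθB : ∀ x, HasSum (fun j => L j (B j x)) (θB x)) (x : E) :
    HasSum (fun j => adjoint (B j) (A j x)) (adjoint θB (θA x)) := by
  have hB := eq_adjoint_comp_of_hasSum_of_orthonormal hL1 hL0 hθB
  simpa only [hB, adjoint_comp, adjoint_adjoint, comp_apply] using (adjoint θB).hasSum (hθA x)

theorem adjoint_comp_eq_one_of_hasSum [CompleteSpace E]
    {A : J → (E →L[𝕜] F)} {S T : E →L[𝕜] E}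
    (hS : ∀ x, HasSum (fun j => adjoint (A j) (A j x)) (S x))
    (hdual : ∀ x, HasSum (fun j => adjoint (A j ∘L T) (A j x)) x) :
    adjoint T ∘L S = 1 := by
  ext x
  refine ((adjoint T).hasSum (hS x)).unique ?_
  simpa only [adjoint_comp, comp_apply, one_apply_eq_self] using hdual x

end Frames

theorem stmt14_general
    {H H₀ K : Type*}
    [NormedAddCommGroup H] [InnerProductSpace ℂ H] [CompleteSpace H]
    [NormedAddCommGroup H₀] [InnerProductSpace ℂ H₀] [CompleteSpace H₀]
    [NormedAddCommGroup K] [InnerProductSpace ℂ K] [CompleteSpace K]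
    {J : Type*}
    (L : J → (H₀ →L[ℂ] K))
    (hL1 : ∀ j, (adjoint (L j)) ∘L (L j) = (1 : H₀ →L[ℂ] H₀))
    (hL0 : ∀ i j, i ≠ j → (adjoint (L i)) ∘L (L j) = 0)
    (A B : J → (H →L[ℂ] H₀))
    (SA : H →L[ℂ] H)
    (hSA : ∀ x, HasSum (fun j => adjoint (A j) (A j x)) (SA x))
    (hSApos : SA.IsPositive)
    (SAinv : H →L[ℂ] H) (hSAinv₂ : SA ∘L SAinv = 1)
    (θA θB : H →L[ℂ] K)
    (hθA : ∀ x, HasSum (fun j => L j (A j x)) (θA x))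
    (hθB : ∀ x, HasSum (fun j => L j (B j x)) (θB x)) :
    ((adjoint θB ∘L θA = 1) ↔
      ∀ x, HasSum (fun j => adjoint (B j) (A j x)) x) ∧
    (adjoint θB ∘L θA = 1 →
      ∀ T : H →L[ℂ] H, IsUnit T → (∀ j, B j = A j ∘L T) →
        ∀ j, B j = A j ∘L SAinv) := by
  have hsum := hasSum_adjoint_apply_of_orthonormal hL1 hL0 hθA hθB
  have hiff : adjoint θB ∘L θA = 1 ↔ ∀ x, HasSum (fun j => adjoint (B j) (A j x)) x :=
    ⟨fun h x => by simpa only [← comp_apply, h, one_apply_eq_self] using hsum x,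
      fun h => ext fun x => (hsum x).unique (h x)⟩
  refine ⟨hiff, fun hdual T _ hBT j => ?_⟩
  have hTS : adjoint T ∘L SA = 1 :=
    adjoint_comp_eq_one_of_hasSum hSA fun x => by simpa only [hBT] using hiff.mp hdual x
  have hT : T = SAinv :=
    hSApos.isSelfAdjoint.eq_of_star_mul_eq_one hSAinv₂ (by rwa [star_eq_adjoint])
  rw [hBT j, hT]

/-- An operator-valued frame `{B_j}` is a dual of `{A_j}`
(`θ_B* θ_A = 1`) iff `Σ_j B_j* A_j = 1` in the strong operator topology. Moreover if
`{B_j}` is both right-similar to and a dual of `{A_j}`, then `B_j = A_j S_A⁻¹` for all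
`j`, i.e. `{B_j}` is the canonical dual. -/
theorem stmt14
    {H H₀ K : Type*}
    [NormedAddCommGroup H] [InnerProductSpace ℂ H] [CompleteSpace H]
    [NormedAddCommGroup H₀] [InnerProductSpace ℂ H₀] [CompleteSpace H₀]
    [NormedAddCommGroup K] [InnerProductSpace ℂ K] [CompleteSpace K]
    {J : Type*}
    (L : J → (H₀ →L[ℂ] K))
    (hL1 : ∀ j, (adjoint (L j)) ∘L (L j) = (1 : H₀ →L[ℂ] H₀))
    (hL0 : ∀ i j, i ≠ j → (adjoint (L i)) ∘L (L j) = 0)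
    (hLsum : ∀ x : K, HasSum (fun j => L j ((adjoint (L j)) x)) x)
    (A B : J → (H →L[ℂ] H₀))
    (SA SB : H →L[ℂ] H)
    (hSA : ∀ x, HasSum (fun j => adjoint (A j) (A j x)) (SA x))
    (hSB : ∀ x, HasSum (fun j => adjoint (B j) (B j x)) (SB x))
    (hSApos : SA.IsPositive) (hSBpos : SB.IsPositive)
    (SAinv : H →L[ℂ] H) (hSAinv₁ : SAinv ∘L SA = 1) (hSAinv₂ : SA ∘L SAinv = 1)
    (hSBinv : IsUnit SB)
    (θA θB : H →L[ℂ] K)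
    (hθA : ∀ x, HasSum (fun j => L j (A j x)) (θA x))
    (hθB : ∀ x, HasSum (fun j => L j (B j x)) (θB x)) :
    ((adjoint θB ∘L θA = 1) ↔
      ∀ x, HasSum (fun j => adjoint (B j) (A j x)) x) ∧
    (adjoint θB ∘L θA = 1 →
      ∀ T : H →L[ℂ] H, IsUnit T → (∀ j, B j = A j ∘L T) →
        ∀ j, B j = A j ∘L SAinv) :=
  stmt14_general L hL1 hL0 A B SA hSA hSApos SAinv hSAinv₂ θA θB hθA hθB
end

section
/- Let A ∈ B(H,H_o) be a frame generator for a unitary representation (G,π,H) of a discrete group G, i.e., {A_g := Aπ_{g^{-1}}}_{g∈G} is an operator-valued frame. Then θ_A π_g = (λ_g ⊗ I_o) θ_A for all g ∈ G, where λ is the left regular representation of G on ℓ²(G). Consequently, for any two frame generators A, B for (G,π,H), the operator θ_A*θ_B commutes with π(G); in particular S_A ∈ π(G)' and A S_A^{-1/2} is a Parseval frame generator. -/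
/-! Reindexing the defining sum of `θ_A` by `q ↦ g q`, which `λ_g` implements on the `L_q`,
gives `θ_A π_g = λ_g θ_A`. Since `π_g` and `λ_g` are unitary, taking adjoints gives
`θ_A^* λ_g = π_g θ_A^*`, so `θ_A^* θ_B` commutes with `π_g`; orthonormality of the `L_g`
identifies `S_A` with `θ_A^* θ_A`. Finally `R = S_A^{-1/2}` is the positive square root of
`S_A⁻¹ ∈ π(G)'`, so it lies in `π(G)'` by the continuous functional calculus, and then the frame
operator of `A R` is `R S_A R = 1`. -/

open ContinuousLinearMap

theorem Commute.of_mul_self_left {A : Type*} [CStarAlgebra A] [PartialOrder A] [StarOrderedRing A]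
    {a b : A} (ha : 0 ≤ a) (h : Commute (a * a) b) : Commute a b := by
  rw [← CFC.sqrt_mul_self a ha, CFC.sqrt_eq_cfc]
  exact h.cfc_nnreal _

section Adjoint

variable {𝕜 H K : Type*} [RCLike 𝕜]
  [NormedAddCommGroup H] [InnerProductSpace 𝕜 H] [CompleteSpace H]
  [NormedAddCommGroup K] [InnerProductSpace 𝕜 K] [CompleteSpace K]

theorem adjoint_comp_eq_comp_adjoint_of_comp_eq {T : H →L[𝕜] K} {U : H →L[𝕜] H}
    {V : K →L[𝕜] K} (hU : U ∘L adjoint U = 1) (hV : adjoint V ∘L V = 1)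
    (h : T ∘L U = V ∘L T) : adjoint T ∘L V = U ∘L adjoint T := by
  have h' : adjoint U ∘L adjoint T = adjoint T ∘L adjoint V := by
    simpa only [adjoint_comp] using congrArg adjoint h
  calc adjoint T ∘L V = (U ∘L adjoint U) ∘L adjoint T ∘L V := by rw [hU]; rfl
    _ = U ∘L (adjoint T ∘L adjoint V) ∘L V := by rw [← h']; rfl
    _ = U ∘L adjoint T := by rw [comp_assoc, hV]; rfl

theorem hasSum_adjoint_comp_right_apply {ι : Type*} {F : ι → (H →L[𝕜] K)} {S : H →L[𝕜] H}
    (hS : ∀ x, HasSum (fun i => adjoint (F i) (F i x)) (S x)) (R : H →L[𝕜] H) (x : H) :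
    HasSum (fun i => adjoint (F i ∘L R) ((F i ∘L R) x)) (adjoint R (S (R x))) := by
  simpa only [adjoint_comp, comp_apply] using (adjoint R).hasSum (hS (R x))

end Adjoint

section AnalysisOperator

variable {𝕜 H H₀ K ι : Type*} [RCLike 𝕜]
  [NormedAddCommGroup H] [InnerProductSpace 𝕜 H]
  [NormedAddCommGroup H₀] [InnerProductSpace 𝕜 H₀] [CompleteSpace H₀]
  [NormedAddCommGroup K] [InnerProductSpace 𝕜 K] [CompleteSpace K]
  {L : ι → (H₀ →L[𝕜] K)} {F : ι → (H →L[𝕜] H₀)} {θ : H →L[𝕜] K}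

theorem adjoint_comp_analysis (hL1 : ∀ i, adjoint (L i) ∘L L i = 1)
    (hL0 : ∀ i j, i ≠ j → adjoint (L i) ∘L L j = 0)
    (hθ : ∀ x, HasSum (fun i => L i (F i x)) (θ x)) (i : ι) :
    adjoint (L i) ∘L θ = F i := by
  ext x
  refine ((adjoint (L i)).hasSum (hθ x)).unique ?_
  convert hasSum_single (f := fun j => adjoint (L i) (L j (F j x))) i fun j hj => ?_ using 1
  · rw [← comp_apply, hL1]; rfl
  · rw [← comp_apply, hL0 i j (Ne.symm hj)]; rfl

theorem eq_adjoint_analysis_comp_analysis [CompleteSpace H] (hL1 : ∀ i, adjoint (L i) ∘L L i = 1)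
    (hL0 : ∀ i j, i ≠ j → adjoint (L i) ∘L L j = 0)
    (hθ : ∀ x, HasSum (fun i => L i (F i x)) (θ x)) {S : H →L[𝕜] H}
    (hS : ∀ x, HasSum (fun i => adjoint (F i) (F i x)) (S x)) :
    S = adjoint θ ∘L θ := by
  have hθL : ∀ i, adjoint θ ∘L L i = adjoint (F i) := fun i => by
    simpa only [adjoint_comp, adjoint_adjoint] using
      congrArg adjoint (adjoint_comp_analysis hL1 hL0 hθ i)
  ext x
  rw [comp_apply]
  refine (hS x).unique ?_
  convert (adjoint θ).hasSum (hθ x) using 2 with i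
  rw [← comp_apply (adjoint θ), hθL]

end AnalysisOperator

theorem analysis_comp_eq_comp_analysis {𝕜 H H₀ K G : Type*} [NontriviallyNormedField 𝕜]
    [NormedAddCommGroup H] [NormedSpace 𝕜 H] [NormedAddCommGroup H₀] [NormedSpace 𝕜 H₀]
    [NormedAddCommGroup K] [NormedSpace 𝕜 K] [Group G]
    {π : G →* (H →L[𝕜] H)} {L : G → (H₀ →L[𝕜] K)} {lam : G → (K →L[𝕜] K)}
    (hlam : ∀ g q, lam g ∘L L q = L (g * q)) {A : H →L[𝕜] H₀} {θ : H →L[𝕜] K}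
    (hθ : ∀ x, HasSum (fun g => L g ((A ∘L π g⁻¹) x)) (θ x)) (g : G) :
    θ ∘L π g = lam g ∘L θ := by
  ext x
  simp only [comp_apply]
  refine ((Equiv.mulLeft g).hasSum_iff.mpr (hθ (π g x))).unique ?_
  convert (lam g).hasSum (hθ x) using 2 with q
  have hπ : π (g * q)⁻¹ (π g x) = π q⁻¹ x := by
    rw [← mul_apply_eq_comp, ← map_mul, mul_inv_rev, inv_mul_cancel_right]
  simp only [Function.comp_apply, Equiv.coe_mulLeft, comp_apply, hπ]
  rw [← comp_apply (lam g), hlam]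

theorem adjoint_analysis_comp_analysis_comp_eq {𝕜 H H₀ K G : Type*} [RCLike 𝕜]
    [NormedAddCommGroup H] [InnerProductSpace 𝕜 H] [CompleteSpace H]
    [NormedAddCommGroup H₀] [InnerProductSpace 𝕜 H₀]
    [NormedAddCommGroup K] [InnerProductSpace 𝕜 K] [CompleteSpace K] [Group G]
    {π : G →* (H →L[𝕜] H)} {L : G → (H₀ →L[𝕜] K)} {lam : G → (K →L[𝕜] K)}
    (hπ : ∀ g, adjoint (π g) = π g⁻¹)
    (hlamU : ∀ g, adjoint (lam g) ∘L lam g = 1) (hlam : ∀ g q, lam g ∘L L q = L (g * q))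
    {A B : H →L[𝕜] H₀} {θA θB : H →L[𝕜] K}
    (hθA : ∀ x, HasSum (fun g => L g ((A ∘L π g⁻¹) x)) (θA x))
    (hθB : ∀ x, HasSum (fun g => L g ((B ∘L π g⁻¹) x)) (θB x)) (g : G) :
    (adjoint θA ∘L θB) ∘L π g = π g ∘L (adjoint θA ∘L θB) := by
  have hπU : π g ∘L adjoint (π g) = 1 := by
    rw [hπ, ← mul_def, ← map_mul, mul_inv_cancel, map_one]
  rw [comp_assoc, analysis_comp_eq_comp_analysis hlam hθB, ← comp_assoc,
    adjoint_comp_eq_comp_adjoint_of_comp_eq hπU (hlamU g)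
      (analysis_comp_eq_comp_analysis hlam hθA g), comp_assoc]

theorem hasSum_comp_invSqrt_apply {H H₀ G : Type*}
    [NormedAddCommGroup H] [InnerProductSpace ℂ H] [CompleteSpace H]
    [NormedAddCommGroup H₀] [InnerProductSpace ℂ H₀] [CompleteSpace H₀] [Group G]
    {π : G →* (H →L[ℂ] H)} {A : H →L[ℂ] H₀} {S R : H →L[ℂ] H}
    (hS : ∀ x, HasSum (fun g => adjoint (A ∘L π g⁻¹) ((A ∘L π g⁻¹) x)) (S x))
    (hSπ : ∀ g, S ∘L π g = π g ∘L S) (hR : R.IsPositive)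
    (hRS : (R ∘L R) ∘L S = 1) (hSR : S ∘L (R ∘L R) = 1) (x : H) :
    HasSum (fun g => adjoint ((A ∘L R) ∘L π g⁻¹) (((A ∘L R) ∘L π g⁻¹) x)) x := by
  let u : (H →L[ℂ] H)ˣ := ⟨S, R * R, hSR, hRS⟩
  have hR0 : 0 ≤ R := (nonneg_iff_isPositive R).2 hR
  have hRπ : ∀ g, R ∘L π g = π g ∘L R := fun g =>
    ((Commute.units_inv_left (u := u) (hSπ g)).of_mul_self_left hR0).eq
  have hRSR : adjoint R (S (R x)) = x := by
    have hSR' : S * R = R * S :=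
      (Commute.units_inv_left_iff (u := u)).1 ((Commute.refl R).mul_left (.refl R)) |>.eq
    rw [← star_eq_adjoint, hR.isSelfAdjoint.star_eq, ← mul_apply_eq_comp, ← mul_apply_eq_comp,
      mul_assoc, hSR', ← mul_assoc]
    exact congrArg (· x) hRS
  have hcomp : ∀ g, (A ∘L R) ∘L π g⁻¹ = (A ∘L π g⁻¹) ∘L R := fun g => by
    rw [comp_assoc, comp_assoc, hRπ]
  simpa only [hcomp, hRSR] using hasSum_adjoint_comp_right_apply hS R x

theorem stmt17_general
    {H H₀ K : Type*}
    [NormedAddCommGroup H] [InnerProductSpace ℂ H] [CompleteSpace H]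
    [NormedAddCommGroup H₀] [InnerProductSpace ℂ H₀] [CompleteSpace H₀]
    [NormedAddCommGroup K] [InnerProductSpace ℂ K] [CompleteSpace K]
    {G : Type*} [Group G]
    (π : G →* (H →L[ℂ] H)) (hπ : ∀ g, adjoint (π g) = π g⁻¹)
    (L : G → (H₀ →L[ℂ] K))
    (hL1 : ∀ g, (adjoint (L g)) ∘L (L g) = (1 : H₀ →L[ℂ] H₀))
    (hL0 : ∀ g q, g ≠ q → (adjoint (L g)) ∘L (L q) = 0)
    (lam : G → (K →L[ℂ] K))
    (hlamU : ∀ g, adjoint (lam g) ∘L lam g = 1 ∧ lam g ∘L adjoint (lam g) = 1)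
    (hlam : ∀ g q, lam g ∘L L q = L (g * q))
    (A : H →L[ℂ] H₀)
    (SA : H →L[ℂ] H)
    (hSA : ∀ x, HasSum (fun g => adjoint (A ∘L π g⁻¹) ((A ∘L π g⁻¹) x)) (SA x))
    (θA : H →L[ℂ] K)
    (hθA : ∀ x, HasSum (fun g => L g ((A ∘L π g⁻¹) x)) (θA x)) :
    (∀ g, θA ∘L π g = lam g ∘L θA) ∧
    (∀ (B : H →L[ℂ] H₀) (SB : H →L[ℂ] H) (θB : H →L[ℂ] K),
      (∀ x, HasSum (fun g => adjoint (B ∘L π g⁻¹) ((B ∘L π g⁻¹) x)) (SB x)) →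
      SB.IsPositive → IsUnit SB →
      (∀ x, HasSum (fun g => L g ((B ∘L π g⁻¹) x)) (θB x)) →
      ∀ g, (adjoint θA ∘L θB) ∘L π g = π g ∘L (adjoint θA ∘L θB)) ∧
    (∀ g, SA ∘L π g = π g ∘L SA) ∧
    (∀ R : H →L[ℂ] H, R.IsPositive →
      (R ∘L R) ∘L SA = 1 → SA ∘L (R ∘L R) = 1 →
      ∀ x, HasSum
        (fun g => adjoint ((A ∘L R) ∘L π g⁻¹) (((A ∘L R) ∘L π g⁻¹) x)) x) := by
  have hlamU' : ∀ g, adjoint (lam g) ∘L lam g = 1 := fun g => (hlamU g).1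
  have hSAπ : ∀ g, SA ∘L π g = π g ∘L SA := by
    rw [eq_adjoint_analysis_comp_analysis hL1 hL0 hθA hSA]
    exact adjoint_analysis_comp_analysis_comp_eq hπ hlamU' hlam hθA hθA
  refine ⟨analysis_comp_eq_comp_analysis hlam hθA, ?_, hSAπ, ?_⟩
  · intro B SB θB _ _ _ hθB
    exact adjoint_analysis_comp_analysis_comp_eq hπ hlamU' hlam hθA hθB
  · intro R hR hRS hSR
    exact hasSum_comp_invSqrt_apply hSA hSAπ hR hRS hSR

/-- Let `A ∈ B(H,H₀)` be a frame generator for a unitary representation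
`(G,π,H)` of a discrete group `G`, i.e. `{A π_{g⁻¹}}_{g∈G}` is an operator-valued
frame with analysis operator `θ_A`. Then:
(i) `θ_A π_g = (λ_g ⊗ I₀) θ_A` for all `g`, where `lam g` is the operator
`λ_g ⊗ I₀` on `K = ℓ²(G)⊗H₀`, characterized by `lam g ∘ L_q = L_{gq}`;
(ii) for any two frame generators `A, B`, the operator `θ_A* θ_B` commutes with every
`π_g`; in particular `S_A ∈ π(G)'`;
(iii) `A S_A^{-1/2}` is a Parseval frame generator. -/
theorem stmt17
    {H H₀ K : Type*}
    [NormedAddCommGroup H] [InnerProductSpace ℂ H] [CompleteSpace H]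
    [NormedAddCommGroup H₀] [InnerProductSpace ℂ H₀] [CompleteSpace H₀]
    [NormedAddCommGroup K] [InnerProductSpace ℂ K] [CompleteSpace K]
    {G : Type*} [Group G]
    (π : G →* (H →L[ℂ] H)) (hπ : ∀ g, adjoint (π g) = π g⁻¹)
    (L : G → (H₀ →L[ℂ] K))
    (hL1 : ∀ g, (adjoint (L g)) ∘L (L g) = (1 : H₀ →L[ℂ] H₀))
    (hL0 : ∀ g q, g ≠ q → (adjoint (L g)) ∘L (L q) = 0)
    (hLsum : ∀ x : K, HasSum (fun g => L g ((adjoint (L g)) x)) x)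
    (lam : G → (K →L[ℂ] K))
    (hlamU : ∀ g, adjoint (lam g) ∘L lam g = 1 ∧ lam g ∘L adjoint (lam g) = 1)
    (hlam : ∀ g q, lam g ∘L L q = L (g * q))
    (A : H →L[ℂ] H₀)
    (SA : H →L[ℂ] H)
    (hSA : ∀ x, HasSum (fun g => adjoint (A ∘L π g⁻¹) ((A ∘L π g⁻¹) x)) (SA x))
    (hSApos : SA.IsPositive) (hSAinv : IsUnit SA)
    (θA : H →L[ℂ] K)
    (hθA : ∀ x, HasSum (fun g => L g ((A ∘L π g⁻¹) x)) (θA x)) :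
    (∀ g, θA ∘L π g = lam g ∘L θA) ∧
    (∀ (B : H →L[ℂ] H₀) (SB : H →L[ℂ] H) (θB : H →L[ℂ] K),
      (∀ x, HasSum (fun g => adjoint (B ∘L π g⁻¹) ((B ∘L π g⁻¹) x)) (SB x)) →
      SB.IsPositive → IsUnit SB →
      (∀ x, HasSum (fun g => L g ((B ∘L π g⁻¹) x)) (θB x)) →
      ∀ g, (adjoint θA ∘L θB) ∘L π g = π g ∘L (adjoint θA ∘L θB)) ∧
    (∀ g, SA ∘L π g = π g ∘L SA) ∧
    (∀ R : H →L[ℂ] H, R.IsPositive →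
      (R ∘L R) ∘L SA = 1 → SA ∘L (R ∘L R) = 1 →
      ∀ x, HasSum
        (fun g => adjoint ((A ∘L R) ∘L π g⁻¹) (((A ∘L R) ∘L π g⁻¹) x)) x) :=
  stmt17_general π hπ L hL1 hL0 lam hlamU hlam A SA hSA θA hθA
end

section
/- Let G be a discrete group and {A_g}_{g∈G} a Parseval operator-valued frame in B(H,H_o). There exists a unitary representation π of G on H with A_g = A_e π_{g^{-1}} for all g ∈ G if and only if A_{gp} A_{gq}* = A_p A_q* for all p,q,g ∈ G. -/
/-!
If `A g = A 1 ∘ π g⁻¹` with `π` unitary, then `A (g p) A (g q)* = A 1 π (p⁻¹ q) A 1*` depends only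
on `p⁻¹ q`. Conversely, the condition says that each shifted family `h ↦ A (g⁻¹ h)` is again a
Parseval frame with the same cross-Gram kernel `A p A q*` as `A`. For two Parseval frames `A`, `B`
with equal kernels, `U = ∑ₕ A h* B h` satisfies `A k U = B k` for all `k`, so `U` is an isometry;
since a Parseval frame separates points, these intertwiners are unique, which makes `g ↦ U g`
multiplicative, and an invertible isometry is unitary.
-/

open ContinuousLinearMap

section ParsevalFrame

variable {ι H H₀ : Type*}
  [NormedAddCommGroup H] [InnerProductSpace ℂ H] [CompleteSpace H]
  [NormedAddCommGroup H₀] [InnerProductSpace ℂ H₀] [CompleteSpace H₀]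

def IsParsevalFrame (A : ι → H →L[ℂ] H₀) : Prop :=
  ∀ x, HasSum (fun i => adjoint (A i) (A i x)) x

namespace IsParsevalFrame

variable {A B : ι → H →L[ℂ] H₀}

theorem comp_equiv {ι' : Type*} (hA : IsParsevalFrame A) (e : ι' ≃ ι) :
    IsParsevalFrame (A ∘ e) :=
  fun x => (e.hasSum_iff (f := fun i => adjoint (A i) (A i x))).2 (hA x)

theorem hasSum_inner (hA : IsParsevalFrame A) (x y : H) :
    HasSum (fun i => inner ℂ (A i x) (A i y)) (inner ℂ x y) := by
  simpa only [innerSL_apply_apply, adjoint_inner_right] using (innerSL ℂ x).hasSum (hA y)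

theorem hasSum_norm_sq (hA : IsParsevalFrame A) (x : H) :
    HasSum (fun i => ‖A i x‖ ^ 2) (‖x‖ ^ 2) := by
  simpa only [RCLike.reCLM_apply, inner_self_eq_norm_sq] using
    (RCLike.reCLM (K := ℂ)).hasSum (hA.hasSum_inner x x)

theorem eq_of_forall_apply_eq (hA : IsParsevalFrame A) {x y : H} (h : ∀ i, A i x = A i y) :
    x = y :=
  (hA x).unique (by simpa only [h] using hA y)

theorem ext_comp {E : Type*} [NormedAddCommGroup E] [NormedSpace ℂ E] (hA : IsParsevalFrame A)
    {S T : E →L[ℂ] H} (h : ∀ i, A i ∘L S = A i ∘L T) : S = T :=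
  ext fun x => hA.eq_of_forall_apply_eq fun i => congr($(h i) x)

theorem norm_sum_adjoint_sq_le (hA : IsParsevalFrame A) (y : ι → H₀) (s : Finset ι) :
    ‖∑ i ∈ s, adjoint (A i) (y i)‖ ^ 2 ≤ ∑ i ∈ s, ‖y i‖ ^ 2 := by
  set v := ∑ i ∈ s, adjoint (A i) (y i)
  have hAv : ∑ i ∈ s, ‖A i v‖ ^ 2 ≤ ‖v‖ ^ 2 :=
    sum_le_hasSum s (fun _ _ => sq_nonneg _) (hA.hasSum_norm_sq v)
  have hv : ‖v‖ ^ 2 ≤ ∑ i ∈ s, ‖y i‖ * ‖A i v‖ := by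
    rw [← inner_self_eq_norm_sq (𝕜 := ℂ), sum_inner, map_sum]
    refine Finset.sum_le_sum fun i _ => ?_
    rw [adjoint_inner_left]
    exact re_inner_le_norm _ _
  have hcs := Finset.sum_mul_sq_le_sq_mul_sq s (fun i => ‖y i‖) (fun i => ‖A i v‖)
  have hy : 0 ≤ ∑ i ∈ s, ‖y i‖ ^ 2 := Finset.sum_nonneg fun _ _ => sq_nonneg _
  nlinarith [sq_nonneg ‖v‖]

theorem summable_adjoint_apply (hA : IsParsevalFrame A) {y : ι → H₀}
    (hy : Summable fun i => ‖y i‖ ^ 2) : Summable fun i => adjoint (A i) (y i) := by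
  refine summable_iff_vanishing_norm.2 fun ε hε => ?_
  obtain ⟨s, hs⟩ := summable_iff_vanishing_norm.1 hy (ε ^ 2) (by positivity)
  refine ⟨s, fun t ht => lt_of_pow_lt_pow_left₀ 2 hε.le ?_⟩
  calc ‖∑ i ∈ t, adjoint (A i) (y i)‖ ^ 2 ≤ ∑ i ∈ t, ‖y i‖ ^ 2 := hA.norm_sum_adjoint_sq_le y t
    _ ≤ ‖∑ i ∈ t, ‖y i‖ ^ 2‖ := le_abs_self _
    _ < ε ^ 2 := hs t ht

theorem apply_tsum_adjoint_apply (hA : IsParsevalFrame A) (hB : IsParsevalFrame B)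
    (hAB : ∀ i j, A i ∘L adjoint (A j) = B i ∘L adjoint (B j)) (x : H) (i : ι) :
    A i (∑' j, adjoint (A j) (B j x)) = B i x := by
  have hsum := hA.summable_adjoint_apply (hB.hasSum_norm_sq x).summable
  calc A i (∑' j, adjoint (A j) (B j x)) = ∑' j, B i (adjoint (B j) (B j x)) := by
        rw [(A i).map_tsum hsum]
        exact tsum_congr fun j => congr($(hAB i j) (B j x))
    _ = B i x := by rw [← (B i).map_tsum (hB x).summable, (hB x).tsum_eq]

theorem exists_isometry_comp_eq (hA : IsParsevalFrame A) (hB : IsParsevalFrame B)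
    (hAB : ∀ i j, A i ∘L adjoint (A j) = B i ∘L adjoint (B j)) :
    ∃ U : H →L[ℂ] H, (∀ x, ‖U x‖ = ‖x‖) ∧ ∀ i, A i ∘L U = B i := by
  set f : H → H := fun x => ∑' j, adjoint (A j) (B j x)
  have hf : ∀ x i, A i (f x) = B i x := hA.apply_tsum_adjoint_apply hB hAB
  have hnorm : ∀ x, ‖f x‖ = ‖x‖ := fun x => by
    have h := (hA.hasSum_norm_sq (f x)).unique (by simpa only [hf] using hB.hasSum_norm_sq x)
    exact (pow_left_inj₀ (norm_nonneg _) (norm_nonneg _) two_ne_zero).1 h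
  let U : H →ₗᵢ[ℂ] H :=
    { toFun := f
      map_add' := fun x y => hA.eq_of_forall_apply_eq fun i => by simp only [hf, map_add]
      map_smul' := fun c x => hA.eq_of_forall_apply_eq fun i => by
        simp only [hf, map_smul, RingHom.id_apply]
      norm_map' := hnorm }
  exact ⟨U.toContinuousLinearMap, hnorm, fun i => ext (hf · i)⟩

end IsParsevalFrame

end ParsevalFrame

section GroupFrame

variable {H H₀ G : Type*}
  [NormedAddCommGroup H] [InnerProductSpace ℂ H] [CompleteSpace H]
  [NormedAddCommGroup H₀] [InnerProductSpace ℂ H₀] [CompleteSpace H₀]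
  [Group G] {A : G → H →L[ℂ] H₀}

theorem comp_adjoint_mul_left_eq (π : G →* (H →L[ℂ] H)) (hπ : ∀ g, adjoint (π g) = π g⁻¹)
    (hA : ∀ g, A g = A 1 ∘L π g⁻¹) (p q g : G) :
    A (g * p) ∘L adjoint (A (g * q)) = A p ∘L adjoint (A q) := by
  have hkernel : ∀ a b : G, A a ∘L adjoint (A b) = A 1 ∘L π (a⁻¹ * b) ∘L adjoint (A 1) := by
    intro a b
    rw [hA a, hA b, adjoint_comp, hπ, inv_inv, map_mul, mul_def, comp_assoc, comp_assoc]
  rw [hkernel, hkernel p q, mul_inv_rev, mul_assoc, inv_mul_cancel_left]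

theorem IsParsevalFrame.exists_unitary_rep (hA : IsParsevalFrame A)
    (hcov : ∀ p q g : G, A (g * p) ∘L adjoint (A (g * q)) = A p ∘L adjoint (A q)) :
    ∃ π : G →* (H →L[ℂ] H), (∀ g, adjoint (π g) = π g⁻¹) ∧ ∀ g h, A h ∘L π g = A (g⁻¹ * h) := by
  choose U hU hAU using fun g : G =>
    hA.exists_isometry_comp_eq (hA.comp_equiv (Equiv.mulLeft g⁻¹)) fun p q => (hcov p q g⁻¹).symm
  have hone : U 1 = 1 := hA.ext_comp fun h => by simp [hAU, one_def]
  have hmul : ∀ g g', U (g * g') = U g * U g' := fun g g' =>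
    hA.ext_comp fun h => by simp [mul_def, ← comp_assoc, hAU, mul_assoc]
  refine ⟨⟨⟨U, hone⟩, hmul⟩, fun g => ?_, hAU⟩
  calc adjoint (U g) = adjoint (U g) * (U g * U g⁻¹) := by rw [← hmul, mul_inv_cancel, hone, mul_one]
    _ = U g⁻¹ := by
      have hUU : adjoint (U g) * U g = 1 := (norm_map_iff_adjoint_comp_self _).1 (hU g)
      rw [← mul_assoc, hUU, one_mul]

end GroupFrame

/-- Let `G` be a discrete group and `{A_g}_{g∈G}` a Parseval
operator-valued frame in `B(H,H₀)` (i.e. `Σ_g A_g* A_g = I` strongly). There is a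
unitary representation `π` of `G` on `H` with `A_g = A_e π_{g⁻¹}` for all `g ∈ G` if
and only if `A_{gp} A_{gq}* = A_p A_q*` for all `p, q, g ∈ G`. -/
theorem stmt18
    {H H₀ : Type*}
    [NormedAddCommGroup H] [InnerProductSpace ℂ H] [CompleteSpace H]
    [NormedAddCommGroup H₀] [InnerProductSpace ℂ H₀] [CompleteSpace H₀]
    {G : Type*} [Group G]
    (A : G → (H →L[ℂ] H₀))
    (hPars : ∀ x, HasSum (fun g => adjoint (A g) (A g x)) x) :
    (∃ π : G →* (H →L[ℂ] H),
        (∀ g, adjoint (π g) = π g⁻¹) ∧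
        ∀ g, A g = A 1 ∘L π g⁻¹) ↔
      (∀ p q g : G, A (g * p) ∘L adjoint (A (g * q)) = A p ∘L adjoint (A q)) := by
  refine ⟨fun ⟨π, hπ, hAπ⟩ => comp_adjoint_mul_left_eq π hπ hAπ, fun hcov => ?_⟩
  obtain ⟨π, hπ, hAπ⟩ := IsParsevalFrame.exists_unitary_rep hPars hcov
  exact ⟨π, hπ, fun g => by simpa using (hAπ g⁻¹ 1).symm⟩
end
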